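/- arXiv:2102.03937 — 3 statements merged into one kernel-verified Lean document; each statement's English description precedes it below -/
import Mathlib

section
/- If there are no always takers, i.e. P(D(0) = 1) = 0, and no defiers, then the treatment-on-the-treated parameter equals the LATE: E[Y(1) − Y(0) | D = 1] = E[Y(1) − Y(0) | C], where D = D(1)·A + D(0)·(1 − A), provided A is independent of (Y(1), Y(0), D(0), D(1)) and P(D = 1) > 0. -/
/-!
Without always takers `D(0) = 0` almost surely, so up to a null set `{D = 1}` is
`{A = 1} ∩ {D(1) = 1}` and the compliers `C` are `{D(1) = 1}`. Since `A` is independent of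
`(Y(1), Y(0), D(0), D(1))`, conditioning additionally on the event `{A = 1}` of positive
probability does not change the conditional mean of `Y(1) - Y(0)` given `{D(1) = 1}`.
-/

open MeasureTheory ProbabilityTheory

namespace ProbabilityTheory

variable {Ω β γ : Type*} [MeasurableSpace Ω] [MeasurableSpace β] [MeasurableSpace γ]
  {μ : Measure Ω} {s t : Set Ω}

theorem cond_congr_ae (h : s =ᵐ[μ] t) : μ[|s] = μ[|t] := by
  rw [cond, cond, Measure.restrict_congr_set h, measure_congr h]

theorem integral_cond_eq_inv_mul_setIntegral {f : Ω → ℝ} :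
    ∫ ω, f ω ∂μ[|s] = (μ.real s)⁻¹ * ∫ ω in s, f ω ∂μ := by
  rw [cond, integral_smul_measure, ENNReal.toReal_inv, smul_eq_mul, measureReal_def]

variable {X : Ω → β} {Y : Ω → γ} {u : Set β} {v : Set γ} {g : γ → ℝ}

theorem IndepFun.setIntegral_preimage_inter_eq_mul (hXY : X ⟂ᵢ[μ] Y)
    (hu : MeasurableSet u) (hv : MeasurableSet v) (hg : Measurable g)
    (hXu : MeasurableSet (X ⁻¹' u)) (hYv : MeasurableSet (Y ⁻¹' v))
    (hgY : AEStronglyMeasurable (fun ω ↦ g (Y ω)) μ) :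
    ∫ ω in X ⁻¹' u ∩ Y ⁻¹' v, g (Y ω) ∂μ = μ.real (X ⁻¹' u) * ∫ ω in Y ⁻¹' v, g (Y ω) ∂μ := by
  have hind : (u.indicator (1 : β → ℝ) ∘ X) ⟂ᵢ[μ] (v.indicator g ∘ Y) :=
    hXY.comp (measurable_one.indicator hu) (hg.indicator hv)
  have hXind : u.indicator (1 : β → ℝ) ∘ X = (X ⁻¹' u).indicator 1 :=
    funext fun _ ↦ (Set.indicator_comp_right _).symm
  have hYind : v.indicator g ∘ Y = (Y ⁻¹' v).indicator (fun ω ↦ g (Y ω)) :=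
    funext fun _ ↦ (Set.indicator_comp_right _).symm
  rw [hXind, hYind] at hind
  calc ∫ ω in X ⁻¹' u ∩ Y ⁻¹' v, g (Y ω) ∂μ
      = ∫ ω, (X ⁻¹' u).indicator 1 ω * (Y ⁻¹' v).indicator (fun ω ↦ g (Y ω)) ω ∂μ := by
        rw [← integral_indicator (hXu.inter hYv), ← Set.indicator_indicator]
        congr with ω
        by_cases hω : ω ∈ X ⁻¹' u <;> simp [hω]
    _ = μ.real (X ⁻¹' u) * ∫ ω in Y ⁻¹' v, g (Y ω) ∂μ := by
        rw [hind.integral_fun_mul_eq_mul_integral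
          (stronglyMeasurable_one.indicator hXu).aestronglyMeasurable (hgY.indicator hYv),
          integral_indicator_one hXu, integral_indicator hYv]

theorem IndepFun.integral_cond_preimage_inter [IsFiniteMeasure μ] (hXY : X ⟂ᵢ[μ] Y)
    (hu : MeasurableSet u) (hv : MeasurableSet v) (hg : Measurable g)
    (hXu : MeasurableSet (X ⁻¹' u)) (hYv : MeasurableSet (Y ⁻¹' v))
    (hgY : AEStronglyMeasurable (fun ω ↦ g (Y ω)) μ) (hμu : μ (X ⁻¹' u) ≠ 0) :
    ∫ ω, g (Y ω) ∂μ[|X ⁻¹' u ∩ Y ⁻¹' v] = ∫ ω, g (Y ω) ∂μ[|Y ⁻¹' v] := by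
  have hmul : μ.real (X ⁻¹' u ∩ Y ⁻¹' v) = μ.real (X ⁻¹' u) * μ.real (Y ⁻¹' v) := by
    rw [measureReal_def, hXY.measure_inter_preimage_eq_mul u v hu hv, ENNReal.toReal_mul,
      measureReal_def, measureReal_def]
  have hμu' : μ.real (X ⁻¹' u) ≠ 0 := (measureReal_ne_zero_iff (measure_ne_top μ _)).2 hμu
  rw [integral_cond_eq_inv_mul_setIntegral, integral_cond_eq_inv_mul_setIntegral,
    hXY.setIntegral_preimage_inter_eq_mul hu hv hg hXu hYv hgY, hmul, mul_inv,
    mul_mul_mul_comm, inv_mul_cancel₀ hμu', one_mul]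

end ProbabilityTheory

theorem stmt10_general {Ω : Type*} [MeasurableSpace Ω] (μ : Measure Ω) [IsProbabilityMeasure μ]
    (A D0 D1 : Ω → Bool) (Y1 Y0 : Ω → ℝ)
    (hA : Measurable A) (hD1 : Measurable D1)
    (hY1 : Integrable Y1 μ) (hY0 : Integrable Y0 μ)
    (hindep : IndepFun A (fun ω => (Y1 ω, Y0 ω, D0 ω, D1 ω)) μ)
    (hAT : μ {ω | D0 ω = true} = 0)
    (hDpos : 0 < μ {ω | (if A ω then D1 ω else D0 ω) = true}) :
    ∫ ω, (Y1 ω - Y0 ω) ∂(μ[|{ω | (if A ω then D1 ω else D0 ω) = true}])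
      = ∫ ω, (Y1 ω - Y0 ω) ∂(μ[|{ω | D0 ω = false ∧ D1 ω = true}]) := by
  set V : Ω → ℝ × ℝ × Bool × Bool := fun ω ↦ (Y1 ω, Y0 ω, D0 ω, D1 ω)
  set T : Set (ℝ × ℝ × Bool × Bool) := {p | p.2.2.2 = true}
  have hD0 : ∀ᵐ ω ∂μ, D0 ω = false := by
    simpa [ae_iff] using hAT
  have hD : {ω | (if A ω then D1 ω else D0 ω) = true}
      =ᵐ[μ] (A ⁻¹' {true} ∩ V ⁻¹' T : Set Ω) := by
    rw [Filter.eventuallyEq_set]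
    filter_upwards [hD0] with ω hω
    cases hAω : A ω <;> simp [V, T, hAω, hω]
  have hC : {ω | D0 ω = false ∧ D1 ω = true} =ᵐ[μ] V ⁻¹' T := by
    rw [Filter.eventuallyEq_set]
    filter_upwards [hD0] with ω hω
    simp [V, T, hω]
  have hμA : μ (A ⁻¹' {true}) ≠ 0 :=
    (hDpos.trans_le ((measure_congr hD).trans_le (measure_mono Set.inter_subset_left))).ne'
  rw [cond_congr_ae hD, cond_congr_ae hC]
  exact hindep.integral_cond_preimage_inter (g := fun p ↦ p.1 - p.2.1)
    (measurableSet_singleton true) (measurable_snd.snd.snd (measurableSet_singleton true))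
    (by fun_prop) (hA (measurableSet_singleton true)) (hD1 (measurableSet_singleton true))
    (hY1.sub hY0).aestronglyMeasurable hμA

theorem stmt10 {Ω : Type*} [MeasurableSpace Ω] (μ : Measure Ω) [IsProbabilityMeasure μ]
    (A D0 D1 : Ω → Bool) (Y1 Y0 : Ω → ℝ)
    (hA : Measurable A) (hD0 : Measurable D0) (hD1 : Measurable D1)
    (hY1 : Integrable Y1 μ) (hY0 : Integrable Y0 μ)
    (hindep : IndepFun A (fun ω => (Y1 ω, Y0 ω, D0 ω, D1 ω)) μ)
    (hAT : μ {ω | D0 ω = true} = 0)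
    (hdef : μ {ω | D0 ω = true ∧ D1 ω = false} = 0)
    (hDpos : 0 < μ {ω | (if A ω then D1 ω else D0 ω) = true}) :
    ∫ ω, (Y1 ω - Y0 ω) ∂(μ[|{ω | (if A ω then D1 ω else D0 ω) = true}])
      = ∫ ω, (Y1 ω - Y0 ω) ∂(μ[|{ω | D0 ω = false ∧ D1 ω = true}]) :=
  stmt10_general μ A D0 D1 Y1 Y0 hA hD1 hY1 hY0 hindep hAT hDpos
end

section
/- The intention-to-treat effect equals the LATE times the complier share: under no defiers and independence of A from (Y(1), Y(0), D(0), D(1)) with P(A=1) ∈ (0,1), E[Y | A=1] − E[Y | A=0] = E[Y(1) − Y(0) | C] · P(C), where Y = Y(1)D + Y(0)(1−D) and D = D(1)A + D(0)(1−A), assuming P(C) > 0. -/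
/-!
On `{A = a}` the observed outcome is the potential outcome `Y(D(a))`, and since `A` is independent
of `(Y(1), Y(0), D(0), D(1))`, conditioning on `{A = a}` does not change its mean. Hence the ITT
effect is `E[Y(D(1)) - Y(D(0))]`. Without defiers this integrand vanishes a.e. outside the
compliers and equals `Y(1) - Y(0)` on them, so the ITT is `∫_C (Y(1) - Y(0)) = LATE · P(C)`.
-/

open MeasureTheory ProbabilityTheory

namespace ProbabilityTheory

variable {Ω E : Type*} [MeasurableSpace Ω] {μ : Measure Ω}
  [NormedAddCommGroup E] [NormedSpace ℝ E]

lemma measureReal_smul_integral_cond [IsFiniteMeasure μ] (s : Set Ω) (f : Ω → E) :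
    μ.real s • ∫ x, f x ∂μ[|s] = ∫ x in s, f x ∂μ := by
  by_cases hs : μ s = 0
  · simp [measureReal_def, hs, Measure.restrict_eq_zero.mpr hs]
  · rw [ProbabilityTheory.cond, integral_smul_measure, smul_smul, ENNReal.toReal_inv,
      measureReal_def, mul_inv_cancel₀ (ENNReal.toReal_ne_zero.mpr ⟨hs, measure_ne_top μ s⟩),
      one_smul]

lemma IndepFun.integral_cond_preimage_comp [IsFiniteMeasure μ] {β γ : Type*}
    [MeasurableSpace β] [MeasurableSpace γ] {A : Ω → β} {X : Ω → γ} (h : IndepFun A X μ)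
    (hA : Measurable A) (hX : AEMeasurable X μ) {t : Set β} (ht : MeasurableSet t)
    (hμt : μ (A ⁻¹' t) ≠ 0) {f : γ → E} (hf : AEStronglyMeasurable f (μ.map X)) :
    ∫ ω, f (X ω) ∂μ[|A ⁻¹' t] = ∫ ω, f (X ω) ∂μ := by
  have key := measureReal_smul_integral_cond (μ := μ) (A ⁻¹' t) (fun ω => f (X ω))
  rw [Indep.setIntegral_eq_smul hA.comap_le h hX ⟨t, ht, rfl⟩ hf] at key
  exact smul_right_injective E ((measureReal_ne_zero_iff (measure_ne_top μ _)).mpr hμt) key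

end ProbabilityTheory

lemma MeasureTheory.Integrable.bool_ite {Ω E : Type*} [MeasurableSpace Ω] {μ : Measure Ω}
    [NormedAddCommGroup E] {D : Ω → Bool} {Y1 Y0 : Ω → E} (hD : Measurable D)
    (hY1 : Integrable Y1 μ) (hY0 : Integrable Y0 μ) :
    Integrable (fun ω => if D ω then Y1 ω else Y0 ω) μ :=
  Integrable.piecewise (s := {ω | D ω = true}) (hD (measurableSet_singleton true))
    hY1.integrableOn hY0.integrableOn

section PotentialOutcomes

variable {Ω : Type*} [MeasurableSpace Ω] {μ : Measure Ω}
  {A D0 D1 : Ω → Bool} {Y1 Y0 : Ω → ℝ}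

lemma integral_cond_eq_integral_potentialOutcome [IsFiniteMeasure μ]
    (hA : Measurable A) (hD0 : Measurable D0) (hD1 : Measurable D1)
    (hY1 : AEMeasurable Y1 μ) (hY0 : AEMeasurable Y0 μ)
    (hindep : IndepFun A (fun ω => (Y1 ω, Y0 ω, D0 ω, D1 ω)) μ)
    (a : Bool) (ha : μ {ω | A ω = a} ≠ 0) :
    ∫ ω, (if (if A ω then D1 ω else D0 ω) then Y1 ω else Y0 ω) ∂μ[|{ω | A ω = a}]
      = ∫ ω, (if (if a then D1 ω else D0 ω) then Y1 ω else Y0 ω) ∂μ := by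
  have hd : Measurable fun p : ℝ × ℝ × Bool × Bool => if a then p.2.2.2 else p.2.2.1 := by
    cases a <;> fun_prop
  have hf : Measurable fun p : ℝ × ℝ × Bool × Bool =>
      if (if a then p.2.2.2 else p.2.2.1) then p.1 else p.2.1 :=
    Measurable.ite (hd (measurableSet_singleton true)) measurable_fst measurable_snd.fst
  calc _ = ∫ ω, (if (if a then D1 ω else D0 ω) then Y1 ω else Y0 ω) ∂μ[|A ⁻¹' {a}] :=
        integral_congr_ae <| ae_cond_of_forall_mem (hA (measurableSet_singleton a))
          fun ω (hω : A ω = a) => by rw [hω]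
    _ = _ := hindep.integral_cond_preimage_comp hA (by fun_prop) (measurableSet_singleton a) ha
        hf.aestronglyMeasurable

lemma potentialOutcome_sub_ae_eq_indicator_compliers
    (hdef : μ {ω | D0 ω = true ∧ D1 ω = false} = 0) :
    (fun ω => (if D1 ω then Y1 ω else Y0 ω) - (if D0 ω then Y1 ω else Y0 ω))
      =ᵐ[μ] {ω | D0 ω = false ∧ D1 ω = true}.indicator (fun ω => Y1 ω - Y0 ω) := by
  refine measure_mono_null (fun ω hω => ?_) hdef
  cases h0 : D0 ω <;> cases h1 : D1 ω <;> simp_all [Set.indicator]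

end PotentialOutcomes

theorem stmt11_general {Ω : Type*} [MeasurableSpace Ω] (μ : Measure Ω) [IsProbabilityMeasure μ]
    (A D0 D1 : Ω → Bool) (Y1 Y0 : Ω → ℝ)
    (hA : Measurable A) (hD0 : Measurable D0) (hD1 : Measurable D1)
    (hY1 : Integrable Y1 μ) (hY0 : Integrable Y0 μ)
    (hindep : IndepFun A (fun ω => (Y1 ω, Y0 ω, D0 ω, D1 ω)) μ)
    (hdef : μ {ω | D0 ω = true ∧ D1 ω = false} = 0)
    (hA1 : 0 < μ {ω | A ω = true}) (hA2 : μ {ω | A ω = true} < 1) :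
    (∫ ω, (if (if A ω then D1 ω else D0 ω) then Y1 ω else Y0 ω)
        ∂(μ[|{ω | A ω = true}]))
      - (∫ ω, (if (if A ω then D1 ω else D0 ω) then Y1 ω else Y0 ω)
          ∂(μ[|{ω | A ω = false}]))
      = (∫ ω, (Y1 ω - Y0 ω) ∂(μ[|{ω | D0 ω = false ∧ D1 ω = true}]))
          * (μ {ω | D0 ω = false ∧ D1 ω = true}).toReal := by
  have hA0 : μ {ω | A ω = false} ≠ 0 := by
    have hcompl : {ω | A ω = false} = {ω | A ω = true}ᶜ := by ext; simp
    rw [hcompl, prob_compl_eq_one_sub (s := {ω | A ω = true}) (hA (measurableSet_singleton true))]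
    exact (tsub_pos_of_lt hA2).ne'
  have hC : MeasurableSet {ω | D0 ω = false ∧ D1 ω = true} :=
    (hD0 (measurableSet_singleton false)).inter (hD1 (measurableSet_singleton true))
  have hobs := integral_cond_eq_integral_potentialOutcome hA hD0 hD1
    hY1.aemeasurable hY0.aemeasurable hindep
  rw [hobs true hA1.ne', hobs false hA0]
  simp only [↓reduceIte, Bool.false_eq_true]
  rw [← integral_sub (hY1.bool_ite hD1 hY0) (hY1.bool_ite hD0 hY0),
    integral_congr_ae (potentialOutcome_sub_ae_eq_indicator_compliers hdef),
    integral_indicator hC, ← measureReal_smul_integral_cond, smul_eq_mul, mul_comm,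
    measureReal_def]

theorem stmt11 {Ω : Type*} [MeasurableSpace Ω] (μ : Measure Ω) [IsProbabilityMeasure μ]
    (A D0 D1 : Ω → Bool) (Y1 Y0 : Ω → ℝ)
    (hA : Measurable A) (hD0 : Measurable D0) (hD1 : Measurable D1)
    (hY1 : Integrable Y1 μ) (hY0 : Integrable Y0 μ)
    (hindep : IndepFun A (fun ω => (Y1 ω, Y0 ω, D0 ω, D1 ω)) μ)
    (hdef : μ {ω | D0 ω = true ∧ D1 ω = false} = 0)
    (hA1 : 0 < μ {ω | A ω = true}) (hA2 : μ {ω | A ω = true} < 1)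
    (hCpos : 0 < μ {ω | D0 ω = false ∧ D1 ω = true}) :
    (∫ ω, (if (if A ω then D1 ω else D0 ω) then Y1 ω else Y0 ω)
        ∂(μ[|{ω | A ω = true}]))
      - (∫ ω, (if (if A ω then D1 ω else D0 ω) then Y1 ω else Y0 ω)
          ∂(μ[|{ω | A ω = false}]))
      = (∫ ω, (Y1 ω - Y0 ω) ∂(μ[|{ω | D0 ω = false ∧ D1 ω = true}]))
          * (μ {ω | D0 ω = false ∧ D1 ω = true}).toReal :=
  stmt11_general μ A D0 D1 Y1 Y0 hA hD0 hD1 hY1 hY0 hindep hdef hA1 hA2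
end

section
/- Under no defiers, independence of A from (Y(1),Y(0),D(0),D(1)) conditional on S = s, P(A=1|S=s) ∈ (0,1), and π_{D(1)}(s) − π_{D(0)}(s) > 0, the stratum-level Wald ratio identifies the stratum LATE: (E[Y | A=1, S=s] − E[Y | A=0, S=s]) / (E[D | A=1, S=s] − E[D | A=0, S=s]) = E[Y(1) − Y(0) | C, S=s]. -/
/-!
Given `S = s`, the instrument `A` is independent of `(Y(1), Y(0), D(0), D(1))`, so conditioning
on `A = a` turns the observed outcome `Y(D(a))` into an unconditional mean `E[Y(D(a))]`. Without
defiers `D(1) - D(0)` is the indicator of the compliers, hence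
`E[Y(D(1))] - E[Y(D(0))] = E[(Y(1) - Y(0)) 1_C]`. The same identity for the outcomes `1` and `0`
turns the first stage into `P(C)`, and the ratio is the complier mean.
-/

open MeasureTheory ProbabilityTheory Set
open scoped ENNReal

section
variable {Ω E : Type*} [MeasurableSpace Ω] [NormedAddCommGroup E] {μ : Measure Ω}

theorem integral_cond_eq_div (s : Set Ω) (f : Ω → ℝ) :
    ∫ ω, f ω ∂μ[|s] = (∫ ω in s, f ω ∂μ) / μ.real s := by
  rw [ProbabilityTheory.cond, integral_smul_measure, ENNReal.toReal_inv, smul_eq_mul,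
    inv_mul_eq_div, measureReal_def]

theorem MeasureTheory.Integrable.ite {D : Ω → Bool} {f g : Ω → E} (hD : Measurable D)
    (hf : Integrable f μ) (hg : Integrable g μ) :
    Integrable (fun ω => if D ω then f ω else g ω) μ := by
  have hs : MeasurableSet {ω | D ω = true} := hD (measurableSet_singleton true)
  refine ((hf.indicator hs).add (hg.indicator hs.compl)).congr (.of_forall fun ω => ?_)
  by_cases h : D ω <;> simp [h]

theorem MeasureTheory.Integrable.cond {f : Ω → E} {s : Set Ω} (hf : Integrable f μ) :
    Integrable f μ[|s] := by
  by_cases hs : μ s = 0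
  · simp [cond_eq_zero_of_meas_eq_zero hs]
  · exact hf.restrict.smul_measure (ENNReal.inv_ne_top.2 hs)

theorem prob_compl_ne_zero_of_toReal_lt_one [IsProbabilityMeasure μ] {s : Set Ω}
    (hs : MeasurableSet s) (h : (μ s).toReal < 1) : μ sᶜ ≠ 0 := by
  rw [Ne, prob_compl_eq_zero_iff hs]
  rintro h1
  simp [h1] at h

theorem integral_cond_preimage_of_indepFun {β : Type*} [MeasurableSpace β] [IsFiniteMeasure μ]
    {A : Ω → β} {f : Ω → ℝ} {s : Set β} (hA : Measurable A) (hs : MeasurableSet s)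
    (hAs : μ (A ⁻¹' s) ≠ 0) (hf : Integrable f μ) (hindep : IndepFun A f μ) :
    ∫ ω, f ω ∂μ[|A ⁻¹' s] = ∫ ω, f ω ∂μ := by
  have hE : MeasurableSet (A ⁻¹' s) := hA hs
  have hind : IndepFun ((A ⁻¹' s).indicator (1 : Ω → ℝ)) f μ :=
    hindep.comp (measurable_one.indicator hs) measurable_id
  have hset : ∫ ω in A ⁻¹' s, f ω ∂μ = μ.real (A ⁻¹' s) * ∫ ω, f ω ∂μ := by
    rw [← integral_indicator_one hE, ← hind.integral_mul_eq_mul_integral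
      (by fun_prop (disch := exact hE)) hf.aestronglyMeasurable, ← integral_indicator hE]
    congr 1 with ω
    by_cases h : ω ∈ A ⁻¹' s <;> simp [h]
  rw [integral_cond_eq_div, hset, mul_div_cancel_left₀]
  simpa [measureReal_def, ENNReal.toReal_eq_zero_iff] using hAs

theorem integral_ite_sub_integral_ite_of_ae_imp {D0 D1 : Ω → Bool} {Y1 Y0 : Ω → ℝ}
    (hD0 : Measurable D0) (hD1 : Measurable D1) (hY1 : Integrable Y1 μ) (hY0 : Integrable Y0 μ)
    (hmono : ∀ᵐ ω ∂μ, D0 ω = true → D1 ω = true) :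
    ∫ ω, (if D1 ω then Y1 ω else Y0 ω) ∂μ - ∫ ω, (if D0 ω then Y1 ω else Y0 ω) ∂μ
      = ∫ ω in {ω | D0 ω = false ∧ D1 ω = true}, (Y1 ω - Y0 ω) ∂μ := by
  have hC : MeasurableSet {ω | D0 ω = false ∧ D1 ω = true} :=
    (hD0 (measurableSet_singleton false)).inter (hD1 (measurableSet_singleton true))
  rw [← integral_sub (hY1.ite hD1 hY0) (hY1.ite hD0 hY0), ← integral_indicator hC]
  refine integral_congr_ae ?_
  filter_upwards [hmono] with ω hω
  cases h0 : D0 ω <;> cases h1 : D1 ω <;> simp_all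

theorem integral_cond_ite_ite_of_indepFun [IsFiniteMeasure μ] {A D0 D1 : Ω → Bool}
    {Y1 Y0 : Ω → ℝ} (hA : Measurable A) (hD0 : Measurable D0) (hD1 : Measurable D1)
    (hY1 : Integrable Y1 μ) (hY0 : Integrable Y0 μ)
    (hindep : IndepFun A (fun ω => (Y1 ω, Y0 ω, D0 ω, D1 ω)) μ)
    (b : Bool) (hb : μ {ω | A ω = b} ≠ 0) :
    ∫ ω, (if (if A ω then D1 ω else D0 ω) then Y1 ω else Y0 ω) ∂μ[|{ω | A ω = b}]
      = ∫ ω, (if (if b then D1 ω else D0 ω) then Y1 ω else Y0 ω) ∂μ := by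
  have hAb : MeasurableSet {ω | A ω = b} := hA (measurableSet_singleton b)
  have hobs : Measurable fun p : ℝ × ℝ × Bool × Bool =>
      if (if b then p.2.2.2 else p.2.2.1) then p.1 else p.2.1 :=
    .ite ((Measurable.ite (.const _) measurable_snd.snd.snd measurable_snd.snd.fst)
      (measurableSet_singleton true)) measurable_fst measurable_snd.fst
  calc _ = ∫ ω, (if (if b then D1 ω else D0 ω) then Y1 ω else Y0 ω) ∂μ[|{ω | A ω = b}] := by
        refine integral_congr_ae ?_
        filter_upwards [ae_cond_mem hAb] with ω (hω : A ω = b)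
        rw [hω]
    _ = _ := integral_cond_preimage_of_indepFun hA (measurableSet_singleton b) hb
        (by cases b <;> exact hY1.ite ‹_› hY0) (hindep.comp measurable_id hobs)

theorem integral_cond_true_sub_integral_cond_false [IsFiniteMeasure μ] {A D0 D1 : Ω → Bool}
    {Y1 Y0 : Ω → ℝ} (hA : Measurable A) (hD0 : Measurable D0) (hD1 : Measurable D1)
    (hY1 : Integrable Y1 μ) (hY0 : Integrable Y0 μ)
    (hindep : IndepFun A (fun ω => (Y1 ω, Y0 ω, D0 ω, D1 ω)) μ)
    (hA1 : μ {ω | A ω = true} ≠ 0) (hA0 : μ {ω | A ω = false} ≠ 0)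
    (hmono : ∀ᵐ ω ∂μ, D0 ω = true → D1 ω = true) :
    ∫ ω, (if (if A ω then D1 ω else D0 ω) then Y1 ω else Y0 ω) ∂μ[|{ω | A ω = true}]
      - ∫ ω, (if (if A ω then D1 ω else D0 ω) then Y1 ω else Y0 ω) ∂μ[|{ω | A ω = false}]
      = ∫ ω in {ω | D0 ω = false ∧ D1 ω = true}, (Y1 ω - Y0 ω) ∂μ := by
  rw [integral_cond_ite_ite_of_indepFun hA hD0 hD1 hY1 hY0 hindep true hA1,
    integral_cond_ite_ite_of_indepFun hA hD0 hD1 hY1 hY0 hindep false hA0]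
  exact integral_ite_sub_integral_ite_of_ae_imp hD0 hD1 hY1 hY0 hmono

end

theorem stmt12_general {Ω : Type*} [MeasurableSpace Ω] (μ : Measure Ω)
    (A D0 D1 : Ω → Bool) (Y1 Y0 : Ω → ℝ) (Ss : Set Ω)
    (hA : Measurable A) (hD0 : Measurable D0) (hD1 : Measurable D1)
    (hSs : MeasurableSet Ss)
    (hY1 : Integrable Y1 μ) (hY0 : Integrable Y0 μ)
    (hindep : IndepFun A (fun ω => (Y1 ω, Y0 ω, D0 ω, D1 ω)) (μ[|Ss]))
    (hdef : μ[|Ss] {ω | D0 ω = true ∧ D1 ω = false} = 0)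
    (hA1 : 0 < (μ[|Ss] {ω | A ω = true}).toReal)
    (hA2 : (μ[|Ss] {ω | A ω = true}).toReal < 1) :
    ((∫ ω, (if (if A ω then D1 ω else D0 ω) then Y1 ω else Y0 ω)
          ∂(μ[|{ω | A ω = true} ∩ Ss]))
      - ∫ ω, (if (if A ω then D1 ω else D0 ω) then Y1 ω else Y0 ω)
          ∂(μ[|{ω | A ω = false} ∩ Ss]))
    / ((∫ ω, (if (if A ω then D1 ω else D0 ω) then (1 : ℝ) else 0)
          ∂(μ[|{ω | A ω = true} ∩ Ss]))
      - ∫ ω, (if (if A ω then D1 ω else D0 ω) then (1 : ℝ) else 0)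
          ∂(μ[|{ω | A ω = false} ∩ Ss]))
    = ∫ ω, (Y1 ω - Y0 ω) ∂(μ[|{ω | D0 ω = false ∧ D1 ω = true} ∩ Ss]) := by
  set ν := μ[|Ss]
  have hAb : ∀ b, MeasurableSet {ω | A ω = b} := fun b => hA (measurableSet_singleton b)
  have hC : MeasurableSet {ω | D0 ω = false ∧ D1 ω = true} :=
    (hD0 (measurableSet_singleton false)).inter (hD1 (measurableSet_singleton true))
  obtain ⟨hSs_top, hSs_zero⟩ : μ Ss ≠ ∞ ∧ μ Ss ≠ 0 := by
    have hν : ν ≠ 0 := by rintro h; simp [h] at hA1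
    simpa [ν, not_or] using hν
  have : IsProbabilityMeasure ν := cond_isProbabilityMeasure_of_finite hSs_zero hSs_top
  have hcond : ∀ {E}, MeasurableSet E → μ[|E ∩ Ss] = ν[|E] := fun hE => by
    rw [inter_comm, cond_cond_eq_cond_inter' hSs hE hSs_top]
  have hY1ν : Integrable Y1 ν := hY1.cond
  have hY0ν : Integrable Y0 ν := hY0.cond
  have hAtrue : ν {ω | A ω = true} ≠ 0 := fun h => by simp [h] at hA1
  have hAfalse : ν {ω | A ω = false} ≠ 0 := by
    convert prob_compl_ne_zero_of_toReal_lt_one (hAb true) hA2 using 2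
    ext; simp
  have hmono : ∀ᵐ ω ∂ν, D0 ω = true → D1 ω = true := by
    rw [ae_iff]; simpa using hdef
  -- the first stage is the reduced form for the potential outcomes `1` and `0`
  have hindep₁₀ : IndepFun A (fun ω => ((1 : ℝ), (0 : ℝ), D0 ω, D1 ω)) ν :=
    hindep.comp measurable_id
      (measurable_const.prodMk (measurable_const.prodMk measurable_snd.snd))
  rw [hcond (hAb true), hcond (hAb false), hcond hC,
    integral_cond_true_sub_integral_cond_false hA hD0 hD1 hY1ν hY0ν hindep hAtrue
      hAfalse hmono,
    integral_cond_true_sub_integral_cond_false hA hD0 hD1 (integrable_const 1) (integrable_const 0)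
      hindep₁₀ hAtrue hAfalse hmono,
    integral_cond_eq_div]
  simp

theorem stmt12 {Ω : Type*} [MeasurableSpace Ω] (μ : Measure Ω) [IsProbabilityMeasure μ]
    (A D0 D1 : Ω → Bool) (Y1 Y0 : Ω → ℝ) (Ss : Set Ω)
    (hA : Measurable A) (hD0 : Measurable D0) (hD1 : Measurable D1)
    (hSs : MeasurableSet Ss) (hSpos : 0 < μ Ss)
    (hY1 : Integrable Y1 μ) (hY0 : Integrable Y0 μ)
    (hindep : IndepFun A (fun ω => (Y1 ω, Y0 ω, D0 ω, D1 ω)) (μ[|Ss]))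
    (hdef : μ[|Ss] {ω | D0 ω = true ∧ D1 ω = false} = 0)
    (hA1 : 0 < (μ[|Ss] {ω | A ω = true}).toReal)
    (hA2 : (μ[|Ss] {ω | A ω = true}).toReal < 1)
    (hπ : 0 < (μ[|Ss] {ω | D1 ω = true}).toReal
            - (μ[|Ss] {ω | D0 ω = true}).toReal) :
    ((∫ ω, (if (if A ω then D1 ω else D0 ω) then Y1 ω else Y0 ω)
          ∂(μ[|{ω | A ω = true} ∩ Ss]))
      - ∫ ω, (if (if A ω then D1 ω else D0 ω) then Y1 ω else Y0 ω)
          ∂(μ[|{ω | A ω = false} ∩ Ss]))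
    / ((∫ ω, (if (if A ω then D1 ω else D0 ω) then (1 : ℝ) else 0)
          ∂(μ[|{ω | A ω = true} ∩ Ss]))
      - ∫ ω, (if (if A ω then D1 ω else D0 ω) then (1 : ℝ) else 0)
          ∂(μ[|{ω | A ω = false} ∩ Ss]))
    = ∫ ω, (Y1 ω - Y0 ω) ∂(μ[|{ω | D0 ω = false ∧ D1 ω = true} ∩ Ss]) :=
  stmt12_general μ A D0 D1 Y1 Y0 Ss hA hD0 hD1 hSs hY1 hY0 hindep hdef hA1 hA2
end
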